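/- Let G be a countable discrete group, X a locally compact Hausdorff space with a proper, cocompact G-action, c a cut-off function on X (compactly supported, continuous, nonnegative, with ∑_{h∈G} c(h⁻¹·x)² = 1 for every x), π : C₀(X) → B(H) a nondegenerate covariant representation on the G-Hilbert space H, and V : H → ℓ²(G, H) the isometry (Vv)_h = π(c) u_h v. Let T ∈ B(H) and let T̄ be the bounded operator on ℓ²(G, H) defined by (T̄ξ)_g = u_g T u_g⁻¹ ξ_g. Then V* T̄ V = ∑_{h∈G} π(h·c) T π(h·c), the sum on the right converging in the strong operator topology. Consequently, if ∑_{h∈G} π(h·c) T π(h·c) − T is a compact operator on H, then V* T̄ V − T is compact. -/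

import Mathlib

open scoped ZeroAtInfty
open Filter MeasureTheory Topology

noncomputable section

variable {G : Type*} [Group G] [Countable G] [TopologicalSpace G] [DiscreteTopology G]
variable {X : Type*} [TopologicalSpace X] [LocallyCompactSpace X] [T2Space X]
variable [MulAction G X] [ContinuousConstSMul G X]
variable {H : Type*} [NormedAddCommGroup H] [InnerProductSpace ℂ H] [CompleteSpace H]
  [SecondCountableTopology H]

/-- The translation action of `G` on `C₀(X, ℂ)`: `(g • φ)(x) = φ(g⁻¹ • x)`. -/
def C0smul (g : G) (φ : C₀(X, ℂ)) : C₀(X, ℂ) where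
  toFun := fun x => φ (g⁻¹ • x)
  continuous_toFun := φ.continuous.comp (continuous_const_smul g⁻¹)
  zero_at_infty' := φ.zero_at_infty'.comp
    ((Homeomorph.smul (g⁻¹ : G)).toCocompactMap.cocompact_tendsto')

/-- Conjugation `g(T) = u_g T u_g⁻¹` by the unitary representation `u`. -/
def conjU (u : G →* unitary (H →L[ℂ] H)) (g : G) (T : H →L[ℂ] H) : H →L[ℂ] H :=
  (u g : H →L[ℂ] H) * T * ((u g⁻¹ : unitary (H →L[ℂ] H)) : H →L[ℂ] H)

/-- The Hilbert space `ℓ²(G, H)`. -/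
abbrev l2GH (G H : Type*) [NormedAddCommGroup H] [InnerProductSpace ℂ H] : Type _ :=
  lp (fun _ : G => H) 2

/-!
Expanding `T̄ V v ∈ ℓ²(G, H)` along the coordinate embeddings gives
`V* T̄ V v = ∑_h A_h* (h(T)) (A_h v)` with `A_h = π(c) u_h`. Since `c` is real, `π(c)` is
self-adjoint, so `A_h* h(T) A_h = (u_h⁻¹ π(c) u_h) T (u_h⁻¹ π(c) u_h) = π(h⁻¹c) T π(h⁻¹c)` by
covariance; reindexing by `h ↦ h⁻¹` gives the series. Any other `S` with the same series is
`V* T̄ V` by uniqueness of limits.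
-/

section Compression

variable {𝕜 ι E F : Type*} [RCLike 𝕜] [DecidableEq ι]
  [NormedAddCommGroup E] [InnerProductSpace 𝕜 E] [CompleteSpace E]
  [NormedAddCommGroup F] [InnerProductSpace 𝕜 F] [CompleteSpace F]

open ContinuousLinearMap

theorem lp.adjoint_apply_single (V : E →L[𝕜] lp (fun _ : ι => F) 2) {i : ι} {A : E →L[𝕜] F}
    (hA : ∀ v, V v i = A v) (w : F) :
    adjoint V (lp.single 2 i w) = adjoint A w := by
  refine ext_inner_right 𝕜 fun v => ?_
  rw [adjoint_inner_left, adjoint_inner_left, lp.inner_single_left, hA]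

theorem lp.hasSum_adjoint_comp_diagonal_comp (V : E →L[𝕜] lp (fun _ : ι => F) 2)
    (D : lp (fun _ : ι => F) 2 →L[𝕜] lp (fun _ : ι => F) 2) {A : ι → E →L[𝕜] F}
    {B : ι → F →L[𝕜] F} (hV : ∀ v i, V v i = A i v) (hD : ∀ ξ i, D ξ i = B i (ξ i)) (v : E) :
    HasSum (fun i => adjoint (A i) (B i (A i v))) (adjoint V (D (V v))) := by
  have := (adjoint V).hasSum (lp.hasSum_single ENNReal.ofNat_ne_top (D (V v)))
  simpa only [lp.adjoint_apply_single V (hV · _), hD, hV] using this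

end Compression

theorem Unitary.star_coe_monoidHom_apply {G A : Type*} [Group G] [Monoid A] [StarMul A]
    (u : G →* unitary A) (g : G) : star (u g : A) = u g⁻¹ := by
  rw [← Unitary.coe_star, Unitary.star_eq_inv, map_inv]

theorem ZeroAtInftyContinuousMap.isSelfAdjoint_of_im_eq_zero {Y : Type*} [TopologicalSpace Y]
    {f : C₀(Y, ℂ)} (hf : ∀ y, (f y).im = 0) : IsSelfAdjoint f :=
  ZeroAtInftyContinuousMap.ext fun y => Complex.conj_eq_iff_im.mpr (hf y)

theorem statement_14_general
    (u : G →* unitary (H →L[ℂ] H))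
    (π : C₀(X, ℂ) →⋆ₙₐ[ℂ] (H →L[ℂ] H))
    (hcov : ∀ (g : G) (φ : C₀(X, ℂ)),
      (u g : H →L[ℂ] H) * π φ * ((u g⁻¹ : unitary (H →L[ℂ] H)) : H →L[ℂ] H) = π (C0smul g φ))
    (c : C₀(X, ℂ))
    (hc_real : ∀ x : X, (c x).im = 0)
    (V : H →L[ℂ] l2GH G H)
    (hV : ∀ (v : H) (h : G), (V v) h = π c ((u h : H →L[ℂ] H) v))
    (T : H →L[ℂ] H) (Tbar : l2GH G H →L[ℂ] l2GH G H)
    (hTbar : ∀ (ξ : l2GH G H) (g : G), (Tbar ξ) g = conjU u g T (ξ g)) :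
    (∀ v : H,
      HasSum (fun h : G => π (C0smul h c) (T (π (C0smul h c) v)))
        (((ContinuousLinearMap.adjoint V).comp (Tbar.comp V)) v)) ∧
    (∀ S : H →L[ℂ] H,
      (∀ v : H, HasSum (fun h : G => π (C0smul h c) (T (π (C0smul h c) v))) (S v)) →
      IsCompactOperator (⇑(S - T)) →
      IsCompactOperator (⇑((ContinuousLinearMap.adjoint V).comp (Tbar.comp V) - T))) := by
  classical
  have hπc : star (π c) = π c :=
    (ZeroAtInftyContinuousMap.isSelfAdjoint_of_im_eq_zero hc_real).map π
  have hterm : ∀ g : G,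
      ContinuousLinearMap.adjoint (π c * (u g : H →L[ℂ] H)) * conjU u g T *
        (π c * (u g : H →L[ℂ] H)) = π (C0smul g⁻¹ c) * T * π (C0smul g⁻¹ c) := by
    intro g
    rw [← ContinuousLinearMap.star_eq_adjoint, star_mul, hπc, Unitary.star_coe_monoidHom_apply,
      ← hcov g⁻¹ c, inv_inv, conjU]
    noncomm_ring
  have hsum : ∀ v : H, HasSum (fun h : G => π (C0smul h c) (T (π (C0smul h c) v)))
      ((ContinuousLinearMap.adjoint V).comp (Tbar.comp V) v) := by
    intro v
    rw [← (Equiv.inv G).hasSum_iff]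
    convert lp.hasSum_adjoint_comp_diagonal_comp V Tbar (A := fun g => π c * (u g : H →L[ℂ] H))
      hV hTbar v using 1
    · exact funext fun g => (DFunLike.congr_fun (hterm g) v).symm
    · rfl
  refine ⟨hsum, fun S hS hST => ?_⟩
  rwa [ContinuousLinearMap.ext fun v => (hS v).unique (hsum v)] at hST

theorem statement_14
    (u : G →* unitary (H →L[ℂ] H))
    (π : C₀(X, ℂ) →⋆ₙₐ[ℂ] (H →L[ℂ] H))
    (hπnd : Dense (Submodule.span ℂ (Set.range fun p : C₀(X, ℂ) × H => π p.1 p.2) : Set H))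
    (hcov : ∀ (g : G) (φ : C₀(X, ℂ)),
      (u g : H →L[ℂ] H) * π φ * ((u g⁻¹ : unitary (H →L[ℂ] H)) : H →L[ℂ] H) = π (C0smul g φ))
    (hproper : IsProperMap fun p : G × X => (p.1 • p.2, p.2))
    (hcocompact : CompactSpace (Quotient (MulAction.orbitRel G X)))
    (c : C₀(X, ℂ)) (hcs : HasCompactSupport (⇑c))
    (hc_real : ∀ x : X, (c x).im = 0) (hc_nonneg : ∀ x : X, 0 ≤ (c x).re)
    (hc_sum : ∀ x : X, HasSum (fun h : G => c (h⁻¹ • x) ^ 2) 1)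
    (V : H →L[ℂ] l2GH G H)
    (hViso : ∀ v : H, ‖V v‖ = ‖v‖)
    (hV : ∀ (v : H) (h : G), (V v) h = π c ((u h : H →L[ℂ] H) v))
    (T : H →L[ℂ] H) (Tbar : l2GH G H →L[ℂ] l2GH G H)
    (hTbar : ∀ (ξ : l2GH G H) (g : G), (Tbar ξ) g = conjU u g T (ξ g)) :
    (∀ v : H,
      HasSum (fun h : G => π (C0smul h c) (T (π (C0smul h c) v)))
        (((ContinuousLinearMap.adjoint V).comp (Tbar.comp V)) v)) ∧
    (∀ S : H →L[ℂ] H,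
      (∀ v : H, HasSum (fun h : G => π (C0smul h c) (T (π (C0smul h c) v))) (S v)) →
      IsCompactOperator (⇑(S - T)) →
      IsCompactOperator (⇑((ContinuousLinearMap.adjoint V).comp (Tbar.comp V) - T))) :=
  statement_14_general u π hcov c hc_real V hV T Tbar hTbar

end
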